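/- arXiv:1707.09048 — 2 statements merged into one kernel-verified Lean document; each statement's English description precedes it below -/
import Mathlib

section
/- Let x ≥ y ≥ 2 be real numbers and let n be a positive integer with n ≤ x/y and P(n) ≤ y. Then there exist positive integers a, b with n = a·b, a ≤ √x and b ≤ √x. Consequently, Ψ(x/y, y) ≤ A(x,y) ≤ Ψ(x,y). -/
open Real Filter
open scoped Classical

/-- The set of `y`-smooth positive integers up to `x` (as a finset):
`n` with `1 ≤ n ≤ x` all of whose prime factors are at most `y`. -/
noncomputable def smoothFinset (x y : ℝ) : Finset ℕ :=
  (Finset.Icc 1 ⌊x⌋₊).filter (fun n => ∀ p : ℕ, p.Prime → p ∣ n → (p : ℝ) ≤ y)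

/-- `Ψ(x,y)`, the number of `y`-smooth integers up to `x`. -/
noncomputable def Psi (x y : ℝ) : ℝ := ((smoothFinset x y).card : ℝ)

/-- `A(x,y)`, the number of distinct products `a*b` with `a, b ∈ S(√x, y)`. -/
noncomputable def prodCount (x y : ℝ) : ℝ :=
  ((((smoothFinset (Real.sqrt x) y) ×ˢ (smoothFinset (Real.sqrt x) y)).image
    (fun p => p.1 * p.2)).card : ℝ)

/-!
Take `a` to be the largest divisor of `n` with `a ≤ √x` and `b = n / a`. If `b > √x`, then for
the least prime `p ∣ b` the divisor `a p` exceeds `√x` by maximality, so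
`x < (a p) b ≤ a b y = n y ≤ x`, a contradiction. The inequalities between `Ψ` and `A` are
inclusions of finsets: smooth numbers up to `x / y` are products of two elements of
`S(√x, y)`, and such products are smooth numbers up to `x`.
-/

lemma mem_smoothFinset {x y : ℝ} {n : ℕ} :
    n ∈ smoothFinset x y ↔
      0 < n ∧ (n : ℝ) ≤ x ∧ ∀ p : ℕ, p.Prime → p ∣ n → (p : ℝ) ≤ y := by
  simp only [smoothFinset, Finset.mem_filter, Finset.mem_Icc, and_assoc]
  constructor
  · rintro ⟨hn, hnx, hsmooth⟩
    exact ⟨hn, (Nat.le_floor_iff' (by omega)).mp hnx, hsmooth⟩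
  · rintro ⟨hn, hnx, hsmooth⟩
    exact ⟨hn, (Nat.le_floor_iff' (by omega)).mpr hnx, hsmooth⟩

lemma smooth_mul_iff {y : ℝ} {a b : ℕ} :
    (∀ p : ℕ, p.Prime → p ∣ a * b → (p : ℝ) ≤ y) ↔
      (∀ p : ℕ, p.Prime → p ∣ a → (p : ℝ) ≤ y) ∧ (∀ p : ℕ, p.Prime → p ∣ b → (p : ℝ) ≤ y) := by
  constructor
  · intro h
    exact ⟨fun p hp hpa => h p hp (hpa.mul_right b), fun p hp hpb => h p hp (hpb.mul_left a)⟩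
  · rintro ⟨ha, hb⟩ p hp hpab
    exact (hp.dvd_mul.mp hpab).elim (ha p hp) (hb p hp)

theorem exists_mul_eq_le_of_smooth {s y : ℝ} {n : ℕ} (hs : 1 ≤ s) (hn : 0 < n)
    (hsmooth : ∀ p : ℕ, p.Prime → p ∣ n → (p : ℝ) ≤ y) (hny : (n : ℝ) * y ≤ s ^ 2) :
    ∃ a b : ℕ, 0 < a ∧ 0 < b ∧ n = a * b ∧ (a : ℝ) ≤ s ∧ (b : ℝ) ≤ s := by
  set D := n.divisors.filter (fun d : ℕ => (d : ℝ) ≤ s)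
  have hD : ∀ {d}, d ∈ D ↔ d ∣ n ∧ (d : ℝ) ≤ s := by
    simp [D, hn.ne']
  obtain ⟨a, haD, hmax⟩ := D.exists_max_image id ⟨1, hD.mpr ⟨one_dvd n, by simpa using hs⟩⟩
  obtain ⟨⟨b, rfl⟩, has⟩ := hD.mp haD
  have ha : 0 < a := Nat.pos_of_mul_pos_right hn
  have hb : 0 < b := Nat.pos_of_mul_pos_left hn
  refine ⟨a, b, ha, hb, rfl, has, ?_⟩
  by_contra! hbs
  have hb1 : b ≠ 1 := by
    rintro rfl
    norm_num at hbs
    linarith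
  set p := b.minFac
  have hp : p.Prime := Nat.minFac_prime hb1
  have hpb : p ∣ b := Nat.minFac_dvd b
  have hsap : s < ((a * p : ℕ) : ℝ) := by
    by_contra! hap
    have : a * p ≤ a := hmax (a * p) (hD.mpr ⟨mul_dvd_mul_left a hpb, hap⟩)
    nlinarith [hp.two_le]
  have hpy : (p : ℝ) ≤ y := hsmooth p hp (hpb.mul_left a)
  have hs0 : (0 : ℝ) ≤ s := by linarith
  have hab0 : (0 : ℝ) ≤ (a : ℝ) * b := by positivity
  push_cast at hsap hny
  have hcontra : s ^ 2 < s ^ 2 := calc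
    s ^ 2 = s * s := sq s
    _ < ((a : ℝ) * p) * b := mul_lt_mul'' hsap hbs hs0 hs0
    _ = (a * b) * p := by ring
    _ ≤ (a * b) * y := mul_le_mul_of_nonneg_left hpy hab0
    _ ≤ s ^ 2 := hny
  exact lt_irrefl _ hcontra

theorem exists_mul_eq_le_sqrt_of_smooth {x y : ℝ} {n : ℕ} (hx : 1 ≤ x) (hy : 0 < y)
    (hn : 0 < n) (hnx : (n : ℝ) ≤ x / y)
    (hsmooth : ∀ p : ℕ, p.Prime → p ∣ n → (p : ℝ) ≤ y) :
    ∃ a b : ℕ, 0 < a ∧ 0 < b ∧ n = a * b ∧ (a : ℝ) ≤ √x ∧ (b : ℝ) ≤ √x := by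
  refine exists_mul_eq_le_of_smooth (Real.one_le_sqrt.mpr hx) hn hsmooth ?_
  rw [sq_sqrt (by linarith)]
  exact (le_div_iff₀ hy).mp hnx

theorem smoothFinset_div_subset_image_mul {x y : ℝ} (hx : 1 ≤ x) (hy : 0 < y) :
    smoothFinset (x / y) y ⊆
      (smoothFinset (√x) y ×ˢ smoothFinset (√x) y).image (fun p => p.1 * p.2) := by
  intro n hn
  obtain ⟨hn0, hnx, hsmooth⟩ := mem_smoothFinset.mp hn
  obtain ⟨a, b, ha, hb, rfl, hax, hbx⟩ := exists_mul_eq_le_sqrt_of_smooth hx hy hn0 hnx hsmooth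
  obtain ⟨hasmooth, hbsmooth⟩ := smooth_mul_iff.mp hsmooth
  exact Finset.mem_image.mpr ⟨(a, b), Finset.mem_product.mpr
    ⟨mem_smoothFinset.mpr ⟨ha, hax, hasmooth⟩, mem_smoothFinset.mpr ⟨hb, hbx, hbsmooth⟩⟩, rfl⟩

theorem image_mul_subset_smoothFinset (x y : ℝ) :
    (smoothFinset (√x) y ×ˢ smoothFinset (√x) y).image (fun p => p.1 * p.2) ⊆
      smoothFinset x y := by
  simp only [Finset.subset_iff, Finset.mem_image, Finset.mem_product, Prod.exists]
  rintro _ ⟨a, b, ⟨ha, hb⟩, rfl⟩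
  obtain ⟨ha0, hax, hasmooth⟩ := mem_smoothFinset.mp ha
  obtain ⟨hb0, hbx, hbsmooth⟩ := mem_smoothFinset.mp hb
  have hx : 0 ≤ x := (Real.sqrt_pos.mp (lt_of_lt_of_le (by exact_mod_cast ha0) hax)).le
  refine mem_smoothFinset.mpr ⟨Nat.mul_pos ha0 hb0, ?_, smooth_mul_iff.mpr ⟨hasmooth, hbsmooth⟩⟩
  calc ((a * b : ℕ) : ℝ) = a * b := Nat.cast_mul a b
    _ ≤ √x * √x := mul_le_mul hax hbx (Nat.cast_nonneg b) (sqrt_nonneg x)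
    _ = x := mul_self_sqrt hx

/-- Every `y`-smooth `n ≤ x/y` splits as a product of two factors `≤ √x`;
consequently `Ψ(x/y, y) ≤ A(x,y) ≤ Ψ(x,y)`. -/
theorem stmt_3 (x y : ℝ) (hxy : y ≤ x) (hy : 2 ≤ y) :
    (∀ n : ℕ, 0 < n → (n : ℝ) ≤ x / y →
        (∀ p : ℕ, p.Prime → p ∣ n → (p : ℝ) ≤ y) →
        ∃ a b : ℕ, 0 < a ∧ 0 < b ∧ n = a * b ∧
          (a : ℝ) ≤ Real.sqrt x ∧ (b : ℝ) ≤ Real.sqrt x) ∧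
    Psi (x / y) y ≤ prodCount x y ∧ prodCount x y ≤ Psi x y := by
  have hy0 : 0 < y := by linarith
  have hx1 : 1 ≤ x := by linarith
  exact ⟨fun _ hn hnx hsmooth => exists_mul_eq_le_sqrt_of_smooth hx1 hy0 hn hnx hsmooth,
    Nat.cast_le.mpr (Finset.card_le_card (smoothFinset_div_subset_image_mul hx1 hy0)),
    Nat.cast_le.mpr (Finset.card_le_card (image_mul_subset_smoothFinset x y))⟩
end

section
/- Let y ≥ 2 be real, let κ ∈ (0,1), and let N be a positive integer. Suppose p₁, …, p_N are primes with (1−κ)·y^{1−1/2^i} ≤ p_i ≤ y^{1−1/2^i} for each 1 ≤ i ≤ N, and q₁, …, q_N are primes with (1−κ)·y ≤ q_i ≤ y for each 1 ≤ i ≤ N. Then for every integer j with 0 ≤ j ≤ 2^N − 1, the integer D := Π_{i=1}^{N} p_i·q_i has a positive divisor D_j satisfying (1−κ)^N · y^{N − j/2^N} ≤ D_j ≤ y^{N − j/2^N}. -/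
open Real

/-!
Write `j = ∑_{i ∈ T} 2^{N-i}` in binary with `T ⊆ {1, …, N}`, so that
`N - j/2^N = ∑_{i ≤ N} e_i` where `e_i = 1 - 1/2^i` for `i ∈ T` and `e_i = 1` otherwise.
Taking `p_i` for `i ∈ T` and `q_i` for `i ∉ T`, each chosen factor lies in
`[(1-κ) y^{e_i}, y^{e_i}]`, and multiplying these `N` bounds gives the divisor.
-/

theorem exists_subset_Icc_sum_one_div_two_pow_eq (N j : ℕ) (hj : j < 2 ^ N) :
    ∃ T ⊆ Finset.Icc 1 N, ∑ i ∈ T, (1 : ℝ) / 2 ^ i = j / 2 ^ N := by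
  induction N generalizing j with
  | zero => exact ⟨∅, by simp, by simp [Nat.lt_one_iff.mp (by simpa using hj)]⟩
  | succ N ih =>
    have hIcc : Finset.Icc 1 N ⊆ Finset.Icc 1 (N + 1) := Finset.Icc_subset_Icc_right N.le_succ
    obtain ⟨m, rfl | rfl⟩ := Nat.even_or_odd' j
    · obtain ⟨T, hT, hsum⟩ := ih m (by rw [pow_succ] at hj; omega)
      refine ⟨T, hT.trans hIcc, ?_⟩
      rw [hsum, pow_succ]
      push_cast
      field_simp
    · obtain ⟨T, hT, hsum⟩ := ih m (by rw [pow_succ] at hj; omega)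
      have hfresh : N + 1 ∉ T := fun h => by simpa using hT h
      refine ⟨insert (N + 1) T, Finset.insert_subset (by simp) (hT.trans hIcc), ?_⟩
      rw [Finset.sum_insert hfresh, hsum, pow_succ]
      push_cast
      field_simp
      ring

theorem Finset.sum_ite_mem_one_sub {ι : Type*} [DecidableEq ι] {s T : Finset ι} (hT : T ⊆ s)
    (a : ι → ℝ) :
    ∑ i ∈ s, (if i ∈ T then 1 - a i else 1) = s.card - ∑ i ∈ T, a i := by
  have hsplit : ∀ i ∈ s, (if i ∈ T then 1 - a i else 1) = 1 - if i ∈ T then a i else 0 :=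
    fun i _ => by split_ifs <;> ring
  rw [Finset.sum_congr rfl hsplit, Finset.sum_sub_distrib, Finset.sum_ite_mem,
    Finset.inter_eq_right.mpr hT]
  simp

theorem Finset.prod_ite_mem_dvd_prod_mul {ι M : Type*} [CommMonoid M] [DecidableEq ι]
    (s T : Finset ι) (f g : ι → M) :
    ∏ i ∈ s, (if i ∈ T then f i else g i) ∣ ∏ i ∈ s, f i * g i :=
  Finset.prod_dvd_prod_of_dvd _ _ fun i _ => by
    split_ifs
    · exact dvd_mul_right _ _
    · exact dvd_mul_left _ _

theorem Finset.prod_le_rpow_sum {ι : Type*} (s : Finset ι) {y : ℝ} (hy : 0 < y) {x e : ι → ℝ}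
    (hx : ∀ i ∈ s, 0 ≤ x i) (hle : ∀ i ∈ s, x i ≤ y ^ e i) :
    ∏ i ∈ s, x i ≤ y ^ ∑ i ∈ s, e i := by
  rw [rpow_sum_of_pos hy]
  exact Finset.prod_le_prod hx hle

theorem Finset.pow_card_mul_rpow_sum_le_prod {ι : Type*} (s : Finset ι) {y c : ℝ} (hy : 0 < y)
    (hc : 0 ≤ c) {x e : ι → ℝ} (hle : ∀ i ∈ s, c * y ^ e i ≤ x i) :
    c ^ s.card * y ^ ∑ i ∈ s, e i ≤ ∏ i ∈ s, x i := by
  rw [rpow_sum_of_pos hy, ← Finset.prod_const, ← Finset.prod_mul_distrib]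
  exact Finset.prod_le_prod (fun i _ => by positivity) hle

theorem stmt_9_general (y : ℝ) (hy : 2 ≤ y) (κ : ℝ) (hκ1 : κ < 1)
    (N : ℕ) (p q : ℕ → ℕ)
    (hp : ∀ i : ℕ, 1 ≤ i → i ≤ N → (p i).Prime ∧
      (1 - κ) * y ^ (1 - 1 / (2 : ℝ) ^ i) ≤ (p i : ℝ) ∧
      (p i : ℝ) ≤ y ^ (1 - 1 / (2 : ℝ) ^ i))
    (hq : ∀ i : ℕ, 1 ≤ i → i ≤ N → (q i).Prime ∧
      (1 - κ) * y ≤ (q i : ℝ) ∧ (q i : ℝ) ≤ y) :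
    ∀ j : ℕ, j ≤ 2 ^ N - 1 →
      ∃ D_j : ℕ, 0 < D_j ∧ D_j ∣ (∏ i ∈ Finset.Icc 1 N, p i * q i) ∧
        (1 - κ) ^ N * y ^ ((N : ℝ) - (j : ℝ) / 2 ^ N) ≤ (D_j : ℝ) ∧
        (D_j : ℝ) ≤ y ^ ((N : ℝ) - (j : ℝ) / 2 ^ N) := by
  intro j hj
  obtain ⟨T, hT, hsum⟩ :=
    exists_subset_Icc_sum_one_div_two_pow_eq N j (by have := N.one_le_two_pow; omega)
  let e : ℕ → ℝ := fun i => if i ∈ T then 1 - 1 / 2 ^ i else 1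
  have he : ∑ i ∈ Finset.Icc 1 N, e i = N - j / 2 ^ N := by
    rw [Finset.sum_ite_mem_one_sub hT, hsum, Nat.card_Icc, Nat.add_sub_cancel]
  have hfactor : ∀ i ∈ Finset.Icc 1 N, 0 < (if i ∈ T then p i else q i) ∧
      (1 - κ) * y ^ e i ≤ ((if i ∈ T then p i else q i : ℕ) : ℝ) ∧
      ((if i ∈ T then p i else q i : ℕ) : ℝ) ≤ y ^ e i := by
    intro i hi
    obtain ⟨hi1, hiN⟩ := Finset.mem_Icc.mp hi
    by_cases hiT : i ∈ T
    · simpa [e, hiT] using And.imp_left Nat.Prime.pos (hp i hi1 hiN)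
    · simpa [e, hiT] using And.imp_left Nat.Prime.pos (hq i hi1 hiN)
  refine ⟨∏ i ∈ Finset.Icc 1 N, if i ∈ T then p i else q i,
    Finset.prod_pos fun i hi => (hfactor i hi).1, Finset.prod_ite_mem_dvd_prod_mul _ _ _ _, ?_, ?_⟩
  · have := Finset.pow_card_mul_rpow_sum_le_prod _ (by linarith) (by linarith)
      fun i hi => (hfactor i hi).2.1
    rwa [he, Nat.card_Icc, Nat.add_sub_cancel, ← Nat.cast_prod] at this
  · have := Finset.prod_le_rpow_sum _ (by linarith) (fun i _ => Nat.cast_nonneg _)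
      fun i hi => (hfactor i hi).2.2
    rwa [he, ← Nat.cast_prod] at this

/-- Corollary 1 (second part): if `p_i ∈ [(1−κ)y^{1−1/2^i}, y^{1−1/2^i}]` and
`q_i ∈ [(1−κ)y, y]` are primes for `1 ≤ i ≤ N`, then for each `0 ≤ j ≤ 2^N − 1`
the product `D = Π p_i q_i` has a divisor `D_j` with
`(1−κ)^N y^{N−j/2^N} ≤ D_j ≤ y^{N−j/2^N}`. -/
theorem stmt_9 (y : ℝ) (hy : 2 ≤ y) (κ : ℝ) (hκ0 : 0 < κ) (hκ1 : κ < 1)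
    (N : ℕ) (hN : 0 < N) (p q : ℕ → ℕ)
    (hp : ∀ i : ℕ, 1 ≤ i → i ≤ N → (p i).Prime ∧
      (1 - κ) * y ^ (1 - 1 / (2 : ℝ) ^ i) ≤ (p i : ℝ) ∧
      (p i : ℝ) ≤ y ^ (1 - 1 / (2 : ℝ) ^ i))
    (hq : ∀ i : ℕ, 1 ≤ i → i ≤ N → (q i).Prime ∧
      (1 - κ) * y ≤ (q i : ℝ) ∧ (q i : ℝ) ≤ y) :
    ∀ j : ℕ, j ≤ 2 ^ N - 1 →
      ∃ D_j : ℕ, 0 < D_j ∧ D_j ∣ (∏ i ∈ Finset.Icc 1 N, p i * q i) ∧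
        (1 - κ) ^ N * y ^ ((N : ℝ) - (j : ℝ) / 2 ^ N) ≤ (D_j : ℝ) ∧
        (D_j : ℝ) ≤ y ^ ((N : ℝ) - (j : ℝ) / 2 ^ N) :=
  stmt_9_general y hy κ hκ1 N p q hp hq
end
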